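/- Let Q_8 = {±1, ±iσ^x, ±iσ^y, ±iσ^z} act on A = Z/2Z × Z/2Z such that ±iσ^x and ±iσ^z swap the two factors of A while ±1 and ±iσ^y act trivially. Then H^1(Q_8, A) ≅ Z/2Z. -/

import Mathlib

noncomputable section

/-- The monoid homomorphism from `Multiplicative (ZMod 2)` determined by an element whose
square is `1`. -/
def homOfSq {M : Type*} [Monoid M] (s : M) (hs : s * s = 1) :
    Multiplicative (ZMod 2) →* M where
  toFun g := s ^ (Multiplicative.toAdd g).val
  map_one' := pow_zero s
  map_mul' := by
    intro a b
    show s ^ (Multiplicative.toAdd a + Multiplicative.toAdd b).val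
      = s ^ (Multiplicative.toAdd a).val * s ^ (Multiplicative.toAdd b).val
    have key : ∀ x y : ZMod 2, s ^ (x + y).val = s ^ x.val * s ^ y.val := by
      intro x y
      have h2 : ∀ z : ZMod 2, z = 0 ∨ z = 1 := by decide
      rcases h2 x with rfl | rfl <;> rcases h2 y with rfl | rfl <;>
        simp [hs, show ((1:ZMod 2)+1) = 0 by decide, show ZMod.val (1 : ZMod 2) = 1 by decide]
    exact key _ _

/-- The swap endomorphism of `ℤ/2 × ℤ/2`. -/
def swapEnd : Module.End ℤ (ZMod 2 × ZMod 2) :=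
  (LinearEquiv.prodComm ℤ (ZMod 2) (ZMod 2)).toLinearMap

lemma swapEnd_sq : swapEnd * swapEnd = 1 := LinearMap.ext fun _ => rfl

/-- The representation of `ℤ/2` on `A = ℤ/2 × ℤ/2` where the nontrivial element swaps. -/
def swapRep : Representation ℤ (Multiplicative (ZMod 2)) (ZMod 2 × ZMod 2) :=
  homOfSq swapEnd swapEnd_sq

/-- The surjection `Q₈ → ℤ/2` whose kernel is the cyclic subgroup
`{±1, ±iσʸ} = {a 0, a 2, xa 0, xa 2}` of order 4. -/
def q8parity : QuaternionGroup 2 →* Multiplicative (ZMod 2) where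
  toFun g := Multiplicative.ofAdd (match g with
    | QuaternionGroup.a i => ((i.val : ZMod 2))
    | QuaternionGroup.xa i => ((i.val : ZMod 2)))
  map_one' := by decide
  map_mul' := by decide

/-- The action of `Q₈ = {±1, ±iσˣ, ±iσʸ, ±iσᶻ}` on `A = ℤ/2 × ℤ/2` in which `±iσˣ` and
`±iσᶻ` swap the two factors of `A` while `±1` and `±iσʸ` act trivially. -/
def q8Rep : Representation ℤ (QuaternionGroup 2) (ZMod 2 × ZMod 2) :=
  swapRep.comp q8parity

/-!
Write `A = ℤ/2 × ℤ/2`. Since `xa 0` (that is, `iσʸ`) acts trivially, every coboundary vanishes at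
`xa 0`, so `f ↦ (f (xa 0)).1` descends to `H¹(Q₈, A) → ℤ/2`. It is onto: the function that is
`(1, 1)` on the coset `{xa i}` and `0` elsewhere is a cocycle, because `(1, 1)` is fixed by `Q₈`.
It is injective: the relations `a 1 * a 1 = xa 0 * xa 0 = xa 1 * xa 1` force every cocycle `f` to
take diagonal values at `a 1` and `xa 1`, hence at `xa 0`. So if `(f (xa 0)).1 = 0`, then `f`
agrees with the coboundary of `((f (a 1)).1, 0)` on the generators `a 1, xa 0`, hence everywhere.
-/

universe u

open groupCohomology QuaternionGroup

theorem QuaternionGroup.closure_a_one_xa_zero (n : ℕ) [NeZero n] :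
    Subgroup.closure {a 1, xa 0} = (⊤ : Subgroup (QuaternionGroup n)) := by
  refine (Subgroup.eq_top_iff' _).2 fun g => ?_
  have ha (i : ZMod (2 * n)) : a i ∈ Subgroup.closure {(a 1 : QuaternionGroup n), xa 0} := by
    rw [← ZMod.natCast_zmod_val i, ← a_one_pow]
    exact Subgroup.pow_mem _ (Subgroup.subset_closure (by simp)) _
  rcases g with i | i
  · exact ha i
  · simpa using Subgroup.mul_mem _ (Subgroup.subset_closure (by simp : xa 0 ∈ _)) (ha i)

theorem groupCohomology.eq_zero_of_mem_cocycles₁_of_closure_eq_top {k G : Type u} [CommRing k]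
    [Group G] {A : Rep k G} {f : G → A} (hf : f ∈ cocycles₁ A) {s : Set G}
    (hs : Subgroup.closure s = ⊤) (h0 : ∀ g ∈ s, f g = 0) : f = 0 := by
  let zeros : Subgroup G :=
    { carrier := {g | f g = 0}
      mul_mem' := fun {g h} hg hh => by
        simp_all [(mem_cocycles₁_iff f).1 hf g h]
      one_mem' := cocycles₁_map_one ⟨f, hf⟩
      inv_mem' := fun {g} hg => by
        have := (mem_cocycles₁_iff f).1 hf g⁻¹ g
        rw [inv_mul_cancel, hg, map_zero, zero_add] at this
        exact this.symm.trans (cocycles₁_map_one ⟨f, hf⟩) }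
  have hle : Subgroup.closure s ≤ zeros := (Subgroup.closure_le _).2 h0
  funext g
  exact hle (hs ▸ Subgroup.mem_top g)

namespace q8Rep

theorem apply_a_one : ∀ v : ZMod 2 × ZMod 2, q8Rep (a 1) v = (v.2, v.1) := by decide

theorem apply_xa_one : ∀ v : ZMod 2 × ZMod 2, q8Rep (xa 1) v = (v.2, v.1) := by decide

theorem apply_xa_zero : ∀ v : ZMod 2 × ZMod 2, q8Rep (xa 0) v = v := by decide

section Cocycle

variable {f : QuaternionGroup 2 → ZMod 2 × ZMod 2}

theorem cocycle_map_mul (hf : f ∈ cocycles₁ (Rep.of q8Rep)) (g h : QuaternionGroup 2) :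
    f (g * h) = q8Rep g (f h) + f g :=
  (mem_cocycles₁_iff (A := Rep.of q8Rep) f).1 hf g h

theorem cocycle_map_a_two (hf : f ∈ cocycles₁ (Rep.of q8Rep)) : f (a 2) = 0 := by
  rw [show a 2 = xa 0 * xa 0 by decide, cocycle_map_mul hf, apply_xa_zero,
    CharTwo.add_self_eq_zero]

theorem cocycle_fst_eq_snd (hf : f ∈ cocycles₁ (Rep.of q8Rep)) {g : QuaternionGroup 2}
    (hg : ∀ v, q8Rep g v = (v.2, v.1)) (hgg : g * g = a 2) : (f g).1 = (f g).2 := by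
  have h := cocycle_map_mul hf g g
  rw [hgg, cocycle_map_a_two hf, hg, eq_comm, CharTwo.add_eq_zero] at h
  exact congrArg Prod.snd h

theorem cocycle_map_xa_zero_eq_zero (hf : f ∈ cocycles₁ (Rep.of q8Rep))
    (h0 : (f (xa 0)).1 = 0) : f (xa 0) = 0 := by
  have hxa1 := cocycle_map_mul hf (xa 0) (a 1)
  rw [apply_xa_zero, show xa 0 * a 1 = xa 1 by decide] at hxa1
  have ha1_diag := cocycle_fst_eq_snd hf apply_a_one (by decide)
  have hxa1_diag := cocycle_fst_eq_snd hf apply_xa_one (by decide)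
  rw [hxa1, Prod.fst_add, Prod.snd_add] at hxa1_diag
  refine Prod.ext h0 (show (f (xa 0)).2 = 0 from ?_)
  linear_combination h0 - hxa1_diag + ha1_diag

theorem mem_coboundaries₁_iff (hf : f ∈ cocycles₁ (Rep.of q8Rep)) :
    f ∈ coboundaries₁ (Rep.of q8Rep) ↔ (f (xa 0)).1 = 0 := by
  constructor
  · rintro ⟨x, rfl⟩
    show (q8Rep (xa 0) x - x).1 = 0
    rw [apply_xa_zero, sub_self, Prod.fst_zero]
  · intro h0
    refine ⟨((f (a 1)).1, 0), sub_eq_zero.1 ?_⟩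
    refine eq_zero_of_mem_cocycles₁_of_closure_eq_top
      (sub_mem (d₀₁_apply_mem_cocycles₁ _) hf) (closure_a_one_xa_zero 2) ?_
    simp only [Set.mem_insert_iff, Set.mem_singleton_iff, forall_eq_or_imp, forall_eq,
      Pi.sub_apply]
    show q8Rep (a 1) _ - _ - _ = 0 ∧ q8Rep (xa 0) _ - _ - _ = 0
    rw [apply_a_one, apply_xa_zero, sub_self, zero_sub, neg_eq_zero,
      cocycle_map_xa_zero_eq_zero hf h0, CharTwo.sub_eq_add, CharTwo.sub_eq_add,
      CharTwo.add_eq_zero]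
    have ha1_diag := cocycle_fst_eq_snd hf apply_a_one (by decide)
    exact ⟨Prod.ext (zero_add _) ((add_zero _).trans ha1_diag), rfl⟩

end Cocycle

def nontrivialCocycle : QuaternionGroup 2 → ZMod 2 × ZMod 2
  | .a _ => 0
  | .xa _ => (1, 1)

theorem nontrivialCocycle_mem_cocycles₁ : nontrivialCocycle ∈ cocycles₁ (Rep.of q8Rep) := by
  rw [mem_cocycles₁_iff]
  decide

end q8Rep

/-- With the above `Q₈`-action on `A = ℤ/2 × ℤ/2` (where `±iσˣ, ±iσᶻ`
swap the factors and `±1, ±iσʸ` act trivially), `H¹(Q₈, A) ≅ ℤ/2`. -/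
theorem stmt_12 : Nonempty (groupCohomology.H1 (Rep.of q8Rep) ≃+ ZMod 2) := by
  let φ : cocycles₁ (Rep.of q8Rep) →ₗ[ℤ] ZMod 2 :=
    LinearMap.fst ℤ _ _ ∘ₗ LinearMap.proj (xa 0) ∘ₗ (cocycles₁ (Rep.of q8Rep)).subtype
  have hφ : Function.Surjective φ := by
    intro c
    obtain ⟨m, rfl⟩ := ZMod.intCast_surjective c
    exact ⟨m • ⟨_, q8Rep.nontrivialCocycle_mem_cocycles₁⟩,
      by simp [φ, q8Rep.nontrivialCocycle]⟩
  have hπ : Function.Surjective (H1π (Rep.of q8Rep)) :=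
    (ModuleCat.epi_iff_surjective _).1 inferInstance
  have hker : LinearMap.ker (H1π (Rep.of q8Rep)).hom = LinearMap.ker φ := by
    ext f
    exact (H1π_eq_zero_iff f).trans (q8Rep.mem_coboundaries₁_iff f.2)
  exact ⟨((LinearMap.quotKerEquivOfSurjective _ hπ).symm ≪≫ₗ
    Submodule.quotEquivOfEq _ _ hker ≪≫ₗ LinearMap.quotKerEquivOfSurjective φ hφ).toAddEquiv⟩
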